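/- Let X be a finite pure simplicial complex of dimension at least 2, let G be a group acting on a finite nonempty set S, let φ ∈ C¹(X;G), and let f:Y_φ→X be the projection map. Then |S|·m_f(Y_φ) = Σ_{u∈X(0)} c_X(u) · Σ_{e={v₁,v₂}∈lk(X,u)(1)} (|S| − fix(d₁φ(u,v₁,v₂)))·c_{lk(X,u)}(e). (The summand is well defined since fix(g) is invariant under inversion and conjugation of g, and the values of d₁φ on the reorderings of a 2-simplex are obtained from each other by inversion and conjugation.) -/

import Mathlib

open Finset

variable {V : Type*} [DecidableEq V]

/-- A finite abstract simplicial complex on vertex type `V`. -/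
structure SComplex (V : Type*) [DecidableEq V] where
  faces : Finset (Finset V)
  nonempty_of_mem : ∀ σ ∈ faces, σ.Nonempty
  down_closed : ∀ σ ∈ faces, ∀ τ ⊆ σ, τ.Nonempty → τ ∈ faces

namespace SComplex

/-- The set `X(k)` of `k`-dimensional simplices (cardinality `k+1`). -/
def simps (X : SComplex V) (k : ℕ) : Finset (Finset V) :=
  X.faces.filter fun σ => σ.card = k + 1

/-- The number of vertices of a top-dimensional face. -/
def rank (X : SComplex V) : ℕ := X.faces.sup Finset.card

/-- The weight `c_X(σ)`. -/
noncomputable def weight (X : SComplex V) (σ : Finset V) : ℝ :=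
  (((X.simps (X.rank - 1)).filter fun τ => σ ⊆ τ).card : ℝ) /
    ((X.rank.choose σ.card) * ((X.simps (X.rank - 1)).card))

/-- `X` is pure of dimension `n-1` : every face is contained in a face with `n` vertices. -/
def IsPureOfRank (X : SComplex V) (n : ℕ) : Prop :=
  X.faces.Nonempty ∧ ∀ σ ∈ X.faces, ∃ τ ∈ X.faces, σ ⊆ τ ∧ τ.card = n

/-- The link `lk(X,σ)`. -/
def lk (X : SComplex V) (σ : Finset V) : SComplex V where
  faces := X.faces.filter fun η => η ∪ σ ∈ X.faces ∧ Disjoint η σ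
  nonempty_of_mem := fun η hη => X.nonempty_of_mem η (mem_filter.mp hη).1
  down_closed := by
    intro η hη τ hτη hτ
    rw [mem_filter] at hη ⊢
    refine ⟨X.down_closed η hη.1 τ hτη hτ,
      X.down_closed (η ∪ σ) hη.2.1 (τ ∪ σ) (union_subset_union_left hτη) ?_,
      hη.2.2.mono_left hτη⟩
    exact hτ.mono subset_union_left

/-- The star `st(X,σ)`. -/
def star (X : SComplex V) (σ : Finset V) : Finset (Finset V) :=
  X.faces.filter fun τ => τ ∪ σ ∈ X.faces

/-- The vertices of `X`. -/
def verts (X : SComplex V) [Fintype V] : Finset V :=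
  Finset.univ.filter fun v => ({v} : Finset V) ∈ X.faces

end SComplex
section Cochains

variable {G : Type*} [Group G]

/-- `φ ∈ C¹(X;G)`: an antisymmetric `G`-valued function on ordered pairs. -/
def IsCochain (G : Type*) [Group G] (φ : V → V → G) : Prop :=
  ∀ u v : V, φ u v = (φ v u)⁻¹

/-- The coboundary `d₁φ(u,v,w) = φ(u,v)φ(v,w)φ(w,u)`. -/
def d1 (φ : V → V → G) (u v w : V) : G := φ u v * φ v w * φ w u

/-- `φ ∈ Z¹(X;G)`: a cochain all of whose triangle equations hold. -/
def IsCocycle (X : SComplex V) (φ : V → V → G) : Prop :=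
  IsCochain G φ ∧ ∀ u v w : V, ({u, v, w} : Finset V) ∈ X.simps 2 → d1 φ u v w = 1

open Classical in
/-- The norm `‖φ‖`: total weight of the support of `φ`. -/
noncomputable def norm1 (X : SComplex V) (φ : V → V → G) : ℝ :=
  ∑ e ∈ (X.simps 1).filter (fun e => ∃ u v : V, e = {u, v} ∧ φ u v ≠ 1), X.weight e

open Classical in
/-- The norm `‖d₁φ‖`: total weight of the 2-simplices whose equation is violated. -/
noncomputable def normD1 (X : SComplex V) (φ : V → V → G) : ℝ :=
  ∑ τ ∈ (X.simps 2).filter (fun τ => ∃ u v w : V, τ = {u, v, w} ∧ d1 φ u v w ≠ 1), X.weight τ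

/-- `dist(φ,ψ) = ‖φψ⁻¹‖`. -/
noncomputable def dist1 (X : SComplex V) (φ ψ : V → V → G) : ℝ :=
  norm1 X (fun u v => φ u v * (ψ u v)⁻¹)

/-- The cosystolic norm `‖φ‖_csy`: the distance from `φ` to `Z¹(X;G)`. -/
noncomputable def csyNorm (X : SComplex V) (φ : V → V → G) : ℝ :=
  sInf {d : ℝ | ∃ ψ : V → V → G, IsCocycle X ψ ∧ d = dist1 X φ ψ}

/-- The cosystolic expansion `h₁(X;G)`. -/
noncomputable def h1 (X : SComplex V) (G : Type*) [Group G] : ℝ :=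
  sInf {r : ℝ | ∃ φ : V → V → G, IsCochain G φ ∧ ¬ IsCocycle X φ ∧
    r = normD1 X φ / csyNorm X φ}

end Cochains

section Fix

variable (G : Type*) [Group G] (S : Type*) [Fintype S] [MulAction G S]

open Classical in
/-- `fix(g) = |{s ∈ S : g•s = s}|`. -/
noncomputable def fixCard (g : G) : ℕ :=
  (Finset.univ.filter fun s : S => g • s = s).card

/-- `Fix_G(S) = max_{g ≠ 1} fix(g)`. -/
noncomputable def FixG : ℕ :=
  sSup {k : ℕ | ∃ g : G, g ≠ 1 ∧ fixCard G S g = k}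

end Fix
section Ycomplex

variable {G : Type*} [Group G] {S : Type*} [Fintype S] [DecidableEq S] [MulAction G S]
variable [Fintype V]

open Classical in
/-- The complex `Y_φ` associated to a cochain `φ`, together with the projection
`Prod.fst : Y_φ → X`. -/
noncomputable def Ycomplex (X : SComplex V) (φ : V → V → G) (S : Type*)
    [Fintype S] [DecidableEq S] [MulAction G S] : SComplex (V × S) where
  faces := Finset.univ.filter fun σ : Finset (V × S) =>
    σ.image Prod.fst ∈ X.faces ∧ (σ.image Prod.fst).card = σ.card ∧
    ∀ p ∈ σ, ∀ q ∈ σ, p.1 ≠ q.1 → p.2 = φ p.1 q.1 • q.2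
  nonempty_of_mem := by
    intro σ hσ
    rw [Finset.mem_filter] at hσ
    exact Finset.image_nonempty.mp (X.nonempty_of_mem _ hσ.2.1)
  down_closed := by
    intro σ hσ τ hτσ hτ
    rw [Finset.mem_filter] at hσ ⊢
    obtain ⟨-, h1, h2, h3⟩ := hσ
    refine ⟨Finset.mem_univ _,
      X.down_closed _ h1 _ (Finset.image_subset_image hτσ) (Finset.image_nonempty.mpr hτ),
      ?_, fun p hp q hq => h3 p (hτσ hp) q (hτσ hq)⟩
    exact Finset.card_image_iff.mpr ((Finset.card_image_iff.mp h2).mono hτσ)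

end Ycomplex

section Deficiency

variable {W : Type*} [DecidableEq W] [Fintype W] [Fintype V]

open Classical in
/-- `D_f(ut)`: the edges in the link of `f(ut)` that are not covered by the image of the
link of `ut`. -/
noncomputable def Dset (Y : SComplex W) (X : SComplex V) (f : W → V) (ut : W) :
    Finset (Finset V) :=
  ((X.lk {f ut}).simps 1).filter fun e => ¬ ∃ η ∈ (Y.lk {ut}).faces, η.image f = e

/-- The local deficiency `μ_f(ut)`. -/
noncomputable def locDef (Y : SComplex W) (X : SComplex V) (f : W → V) (ut : W) : ℝ :=
  ∑ e ∈ Dset Y X f ut, (X.lk {f ut}).weight e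

open Classical in
/-- The deficiency `m_f(Y)` of a map `f : Y → X`. -/
noncomputable def deficiency (Y : SComplex W) (X : SComplex V) (f : W → V) : ℝ :=
  ∑ u ∈ X.verts, (X.weight {u} / ((Y.verts.filter fun w => f w = u).card : ℝ)) *
    ∑ ut ∈ Y.verts.filter (fun w => f w = u), locDef Y X f ut

end Deficiency
section MapOver

variable [Fintype V]

/-- An element of `M(X;G,S)`: a surjective simplicial `|S|`-to-`1` map onto `X` whose
vertex fibers are identified with `S` and whose edge fibers are matchings given by the
action of elements of `G`. -/
structure MapOver (X : SComplex V) (G : Type*) (S : Type*) [Group G] [Fintype S]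
    [DecidableEq S] [MulAction G S] [Fintype V] where
  Y : SComplex (V × S)
  simplicial : ∀ τ ∈ Y.faces, τ.image Prod.fst ∈ X.faces
  injOnFaces : ∀ τ ∈ Y.faces, (τ.image Prod.fst).card = τ.card
  surj : ∀ σ ∈ X.faces, ∃ τ ∈ Y.faces, τ.image Prod.fst = σ
  fiber : ∀ p : V × S, ({p} : Finset (V × S)) ∈ Y.faces ↔ ({p.1} : Finset V) ∈ X.faces
  edges : ∀ u v : V, ({u, v} : Finset V) ∈ X.simps 1 → ∃ g : G,
    ∀ s t : S, (({(u, s), (v, t)} : Finset (V × S)) ∈ Y.faces ↔ s = g • t)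

variable {G : Type*} [Group G] {S : Type*} [Fintype S] [DecidableEq S] [MulAction G S]

open Classical in
/-- The set of edges of `Y` lying over a given edge of the base. -/
noncomputable def edgeFiber (Y : SComplex (V × S)) (e : Finset V) :
    Finset (Finset (V × S)) :=
  (Y.simps 1).filter fun e' => e'.image Prod.fst = e

open Classical in
/-- The distance between two elements of `M(X;G,S)`: the weight of the set of edges of
`X` over which the two edge fibers differ. -/
noncomputable def mdist (X : SComplex V) (M₁ M₂ : MapOver X G S) : ℝ :=
  ∑ e ∈ (X.simps 1).filter (fun e => edgeFiber M₁.Y e ≠ edgeFiber M₂.Y e), X.weight e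

/-- The distance from an element of `M(X;G,S)` to the set `M₀(X;G,S)` of genuine covers. -/
noncomputable def distToCovers (X : SComplex V) (M : MapOver X G S) : ℝ :=
  sInf {d : ℝ | ∃ M' : MapOver X G S, deficiency M'.Y X Prod.fst = 0 ∧ d = mdist X M M'}

/-- The `(G,S)`-cover-stability `c(X;G,S)`. -/
noncomputable def coverStability (X : SComplex V) (G : Type*) (S : Type*) [Group G]
    [Fintype S] [DecidableEq S] [MulAction G S] : ℝ :=
  sInf {r : ℝ | ∃ M : MapOver X G S, deficiency M.Y X Prod.fst ≠ 0 ∧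
    r = deficiency M.Y X Prod.fst / distToCovers X M}

end MapOver
section Paths

/-- A (possibly closed) edge path in a complex: consecutive vertices span edges. -/
def IsEdgePath (K : SComplex V) (p : List V) : Prop :=
  (∀ v ∈ p, ({v} : Finset V) ∈ K.faces) ∧
    p.Chain' fun u v => ({u, v} : Finset V) ∈ K.faces

/-- Combinatorial homotopy of edge paths, generated by erasing repetitions and by
collapsing across simplices. -/
inductive Homotopic (K : SComplex V) : List V → List V → Prop
  | refl (p : List V) : Homotopic K p p
  | symm {p q : List V} : Homotopic K p q → Homotopic K q p
  | trans {p q r : List V} : Homotopic K p q → Homotopic K q r → Homotopic K p r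
  | collapse (p q : List V) (a b c : V) (h : ({a, b, c} : Finset V) ∈ K.faces) :
      Homotopic K (p ++ a :: b :: c :: q) (p ++ a :: c :: q)
  | dedup (p q : List V) (a : V) : Homotopic K (p ++ a :: a :: q) (p ++ a :: q)

/-- `K` is connected: any two vertices are joined by an edge path. -/
def SComplexConnected (K : SComplex V) : Prop :=
  ∀ u v : V, ({u} : Finset V) ∈ K.faces → ({v} : Finset V) ∈ K.faces →
    ∃ p : List V, IsEdgePath K p ∧ p.head? = some u ∧ p.getLast? = some v

/-- `K` is simply connected: connected, and every closed edge path is null-homotopic. -/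
def SimplyConnected (K : SComplex V) : Prop :=
  SComplexConnected K ∧
    ∀ (p : List V) (a : V), IsEdgePath K p → p.head? = some a → p.getLast? = some a →
      Homotopic K p [a]

end Paths

section OrderComplex

open Classical in
/-- The order complex of `L ∖ {⊥, ⊤}`: simplices are the nonempty chains avoiding
`⊥` and `⊤`. -/
noncomputable def orderComplex (L : Type*) [Lattice L] [BoundedOrder L] [Fintype L]
    [DecidableEq L] : SComplex L where
  faces := Finset.univ.filter fun σ : Finset L =>
    σ.Nonempty ∧ (∀ x ∈ σ, x ≠ ⊥ ∧ x ≠ ⊤) ∧ ∀ x ∈ σ, ∀ y ∈ σ, x ≤ y ∨ y ≤ x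
  nonempty_of_mem := fun σ hσ => (Finset.mem_filter.mp hσ).2.1
  down_closed := by
    intro σ hσ τ hτσ hτ
    rw [Finset.mem_filter] at hσ ⊢
    exact ⟨Finset.mem_univ _, hτ, fun x hx => hσ.2.2.1 x (hτσ hx),
      fun x hx y hy => hσ.2.2.2 x (hτσ hx) y (hτσ hy)⟩

end OrderComplex
section Building

variable (F : Type*) [Field F] [Fintype F]

noncomputable instance : Fintype (Submodule F (Fin 4 → F)) := by
  have : Finite (Submodule F (Fin 4 → F)) :=
    Finite.of_injective (fun N => (N : Set (Fin 4 → F))) SetLike.coe_injective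
  exact Fintype.ofFinite _

noncomputable instance : DecidableEq (Submodule F (Fin 4 → F)) := Classical.decEq _

/-- The spherical building `A₃(F_q)`: the order complex of the poset of nontrivial proper
linear subspaces of `F_q⁴`. -/
noncomputable def A3 : SComplex (Submodule F (Fin 4 → F)) :=
  orderComplex (Submodule F (Fin 4 → F))

end Building
section FixEdge

variable {G : Type*} [Group G]

open Classical in
/-- The value `fix(d₁φ(u,v₁,v₂))` for an unordered edge `e = {v₁,v₂}` of the link of `u`
(well defined for cochains, since `fix` is invariant under inversion and conjugation). -/
noncomputable def fixEdge (S : Type*) [Fintype S] [MulAction G S] (φ : V → V → G)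
    (u : V) (e : Finset V) : ℕ :=
  sSup {k : ℕ | ∃ v₁ ∈ e, ∃ v₂ ∈ e, v₁ ≠ v₂ ∧ k = fixCard G S (d1 φ u v₁ v₂)}

end FixEdge

/-! The fibre of `Y_φ` over a vertex `u` is `{u} × S`, so the factor `|S|` cancels the average
over the fibre. Lifting `v` and `w` to the link of `(u, s)` forces the lifts `(v, φ(v,u)s)` and
`(w, φ(w,u)s)`, and these are joined in `Y_φ` iff `d₁φ(u,v,w)` fixes `s`. So the edge `{v, w}`
of `lk(X,u)` is missing from the image of the link of exactly `|S| - fix(d₁φ(u,v,w))` of the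
vertices over `u`. -/

theorem natCast_card_mul_div_mul_sum {ι : Type*} [Fintype ι] (c : ℝ) (f : ι → ℝ) :
    (Fintype.card ι : ℝ) * (c / Fintype.card ι * ∑ i, f i) = c * ∑ i, f i := by
  cases isEmpty_or_nonempty ι
  · simp
  · field_simp

section Action

variable {G : Type*} [Group G] {S : Type*} [Fintype S] [MulAction G S]

theorem fixCard_inv (g : G) : fixCard G S g⁻¹ = fixCard G S g := by
  simp only [fixCard]
  congr 1
  ext s
  simp only [mem_filter, mem_univ, true_and]
  rw [_root_.inv_smul_eq_iff, eq_comm]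

theorem card_filter_smul_ne [DecidableEq S] (g : G) :
    (#{s : S | g • s ≠ s} : ℝ) = Fintype.card S - fixCard G S g := by
  have hsplit := card_filter_add_card_filter_not (s := univ) (fun s : S => g • s = s)
  rw [card_univ] at hsplit
  rw [eq_sub_iff_add_eq, fixCard, ← hsplit]
  push_cast
  rw [add_comm]
  congr

end Action

namespace IsCochain

variable {G : Type*} [Group G]

theorem d1_swap {α : Type*} {φ : α → α → G} (hφ : IsCochain G φ) (u v w : α) :
    d1 φ u w v = (d1 φ u v w)⁻¹ := by
  simp only [d1, mul_inv_rev, mul_assoc]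
  rw [hφ u w, hφ w v, hφ v u]

theorem smul_eq_smul_smul_iff {α S : Type*} [MulAction G S] {φ : α → α → G}
    (hφ : IsCochain G φ) (u v w : α) (s : S) :
    φ v u • s = φ v w • φ w u • s ↔ d1 φ u v w • s = s := by
  rw [d1, mul_smul, mul_smul, hφ u v, _root_.inv_smul_eq_iff, eq_comm]

theorem fixEdge_pair {S : Type*} [Fintype S] [MulAction G S] {φ : V → V → G}
    (hφ : IsCochain G φ) (u : V) {v w : V} (hvw : v ≠ w) :
    fixEdge S φ u {v, w} = fixCard G S (d1 φ u v w) := by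
  suffices {k : ℕ | ∃ v₁ ∈ ({v, w} : Finset V), ∃ v₂ ∈ ({v, w} : Finset V),
      v₁ ≠ v₂ ∧ k = fixCard G S (d1 φ u v₁ v₂)} = {fixCard G S (d1 φ u v w)} by
    rw [fixEdge, this, csSup_singleton]
  ext k
  simp only [Set.mem_ofPred_eq, Set.mem_singleton_iff, mem_insert, mem_singleton]
  constructor
  · rintro ⟨v₁, rfl | rfl, v₂, rfl | rfl, hne, rfl⟩ <;> first
      | exact absurd rfl hne
      | rfl
      | rw [hφ.d1_swap, fixCard_inv]
  · rintro rfl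
    exact ⟨v, .inl rfl, w, .inr rfl, hvw, rfl⟩

end IsCochain

section Ycomplex

variable {G : Type*} [Group G] {S : Type*} [Fintype S] [DecidableEq S] [MulAction G S]
  [Fintype V] {X : SComplex V} {φ : V → V → G}

theorem mem_Ycomplex_faces {σ : Finset (V × S)} :
    σ ∈ (Ycomplex X φ S).faces ↔ σ.image Prod.fst ∈ X.faces ∧
      #(σ.image Prod.fst) = #σ ∧ ∀ p ∈ σ, ∀ q ∈ σ, p.1 ≠ q.1 → p.2 = φ p.1 q.1 • q.2 := by
  simp [Ycomplex]

theorem singleton_mem_Ycomplex_faces {v : V} {s : S} :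
    {(v, s)} ∈ (Ycomplex X φ S).faces ↔ {v} ∈ X.faces := by
  simp [mem_Ycomplex_faces]

theorem image_graph_mem_Ycomplex_faces {σ : Finset V} (hσ : σ ∈ X.faces) {t : V → S}
    (ht : ∀ a ∈ σ, ∀ b ∈ σ, a ≠ b → t a = φ a b • t b) :
    σ.image (fun a => (a, t a)) ∈ (Ycomplex X φ S).faces := by
  have hfst : (σ.image fun a => (a, t a)).image Prod.fst = σ := by
    rw [image_image]
    exact image_id'
  refine mem_Ycomplex_faces.mpr ⟨by rwa [hfst], ?_, ?_⟩
  · rw [hfst, card_image_of_injective _ fun a b h => congrArg Prod.fst h]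
  · simp only [mem_image]
    rintro _ ⟨a, ha, rfl⟩ _ ⟨b, hb, rfl⟩ hab
    exact ht a ha b hb hab

theorem filter_fst_verts_Ycomplex {u : V} (hu : u ∈ X.verts) :
    (Ycomplex X φ S).verts.filter (fun p => p.1 = u) =
      univ.map (Function.Embedding.sectR u S) := by
  ext ⟨v, s⟩
  simp only [SComplex.verts, mem_filter, mem_univ, true_and, mem_map,
    Function.Embedding.sectR_apply, Prod.mk.injEq, exists_eq_right,
    singleton_mem_Ycomplex_faces] at hu ⊢
  constructor
  · rintro ⟨-, rfl⟩
    rfl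
  · rintro rfl
    exact ⟨hu, rfl⟩

theorem d1_smul_eq_of_mem_lk_Ycomplex {u v w : V} (huv : u ≠ v) (huw : u ≠ w) (hvw : v ≠ w)
    {s : S} {η : Finset (V × S)} (hη : η ∈ ((Ycomplex X φ S).lk {(u, s)}).faces)
    (himg : η.image Prod.fst = {v, w}) : d1 φ u v w • s = s := by
  obtain ⟨-, hσ, -⟩ := mem_filter.mp hη
  obtain ⟨-, -, hcomp⟩ := mem_Ycomplex_faces.mp hσ
  obtain ⟨p, hp, rfl⟩ : ∃ p ∈ η, p.1 = v := mem_image.mp (himg ▸ by simp)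
  obtain ⟨q, hq, rfl⟩ : ∃ q ∈ η, q.1 = w := mem_image.mp (himg ▸ by simp)
  have hus : (u, s) ∈ η ∪ {(u, s)} := mem_union_right _ (mem_singleton_self _)
  have hup : s = φ u p.1 • p.2 := hcomp _ hus p (mem_union_left _ hp) huv
  have hqu : q.2 = φ q.1 u • s := hcomp q (mem_union_left _ hq) _ hus huw.symm
  have hpq : p.2 = φ p.1 q.1 • q.2 := hcomp p (mem_union_left _ hp) q (mem_union_left _ hq) hvw
  rw [d1, mul_smul, mul_smul, ← hqu, ← hpq, ← hup]

theorem exists_mem_lk_Ycomplex_of_d1_smul_eq (hφ : IsCochain G φ) {u v w : V} (huv : u ≠ v)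
    (huw : u ≠ w) (hvw : v ≠ w) (hX : {v, w} ∪ {u} ∈ X.faces) {s : S}
    (hs : d1 φ u v w • s = s) :
    ∃ η ∈ ((Ycomplex X φ S).lk {(u, s)}).faces, η.image Prod.fst = {v, w} := by
  -- `φ u u` need not be `1` for a cochain, so the lift of `u` itself is prescribed separately.
  set t : V → S := Function.update (fun a => φ a u • s) u s
  have ht : ∀ a ∈ ({v, w} ∪ {u} : Finset V), ∀ b ∈ ({v, w} ∪ {u} : Finset V),
      a ≠ b → t a = φ a b • t b := by
    intro a ha b hb hab
    by_cases hau : a = u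
    · subst hau
      simp [t, Function.update_of_ne hab.symm, smul_smul, hφ a b]
    by_cases hbu : b = u
    · subst hbu
      simp [t, Function.update_of_ne hau]
    simp only [t, Function.update_of_ne hau, Function.update_of_ne hbu]
    rw [hφ.smul_eq_smul_smul_iff]
    simp only [mem_union, mem_insert, mem_singleton, hau, hbu, or_false] at ha hb
    rcases ha with rfl | rfl <;> rcases hb with rfl | rfl
    · exact absurd rfl hab
    · exact hs
    · rw [hφ.d1_swap, _root_.inv_smul_eq_iff]
      exact hs.symm
    · exact absurd rfl hab
  refine ⟨({v, w} : Finset V).image fun a => (a, t a), mem_filter.mpr ⟨?_, ?_, ?_⟩, ?_⟩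
  · exact image_graph_mem_Ycomplex_faces (X.down_closed _ hX _ subset_union_left (by simp))
      fun a ha b hb => ht a (mem_union_left _ ha) b (mem_union_left _ hb)
  · have : t u = s := Function.update_self ..
    rw [← this, ← image_singleton (fun a => (a, t a)), ← image_union]
    exact image_graph_mem_Ycomplex_faces hX ht
  · simp [huv, huw]
  · simp

end Ycomplex

section Deficiency

variable {G : Type*} [Group G] {S : Type*} [Fintype S] [DecidableEq S] [MulAction G S]
  [Fintype V] {X : SComplex V} {φ : V → V → G}

theorem mem_Dset_Ycomplex_iff (hφ : IsCochain G φ) {u v w : V}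
    (he : {v, w} ∈ (X.lk {u}).simps 1) (s : S) :
    {v, w} ∈ Dset (Ycomplex X φ S) X Prod.fst (u, s) ↔ d1 φ u v w • s ≠ s := by
  obtain ⟨hlk, hcard⟩ := mem_filter.mp he
  obtain ⟨-, hX, hdisj⟩ := mem_filter.mp hlk
  have hvw : v ≠ w := by
    rintro rfl
    simp at hcard
  obtain ⟨huv, huw⟩ : u ≠ v ∧ u ≠ w := by
    simpa [eq_comm] using hdisj
  rw [Dset, mem_filter, and_iff_right he]
  exact not_congr ⟨fun ⟨_, hη, himg⟩ => d1_smul_eq_of_mem_lk_Ycomplex huv huw hvw hη himg,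
    exists_mem_lk_Ycomplex_of_d1_smul_eq hφ huv huw hvw hX⟩

theorem sum_locDef_Ycomplex (hφ : IsCochain G φ) (u : V) :
    ∑ s : S, locDef (Ycomplex X φ S) X Prod.fst (u, s) =
      ∑ e ∈ (X.lk {u}).simps 1,
        ((Fintype.card S : ℝ) - fixEdge S φ u e) * (X.lk {u}).weight e := by
  simp only [locDef]
  rw [sum_comm' (t' := (X.lk {u}).simps 1)
    (s' := fun e => {s | e ∈ Dset (Ycomplex X φ S) X Prod.fst (u, s)}) ?_]
  · refine sum_congr rfl fun e he => ?_
    obtain ⟨v, w, hvw, rfl⟩ := card_eq_two.mp (mem_filter.mp he).2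
    rw [sum_const, nsmul_eq_mul, filter_congr fun s _ => mem_Dset_Ycomplex_iff hφ he s,
      card_filter_smul_ne, hφ.fixEdge_pair u hvw]
  · intro s e
    simp only [mem_univ, true_and, mem_filter]
    exact ⟨fun h => ⟨h, (mem_filter.mp h).1⟩, And.left⟩

end Deficiency

theorem card_mul_deficiency_eq_general
    {V : Type*} [Fintype V] [DecidableEq V]
    {G : Type*} [Group G] {S : Type*} [Fintype S] [DecidableEq S]
    [MulAction G S]
    (X : SComplex V)
    (φ : V → V → G) (hφ : IsCochain G φ) :
    (Fintype.card S : ℝ) * deficiency (Ycomplex X φ S) X Prod.fst =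
      ∑ u ∈ X.verts, X.weight {u} *
        ∑ e ∈ (X.lk {u}).simps 1,
          ((Fintype.card S : ℝ) - fixEdge S φ u e) * (X.lk {u}).weight e := by
  rw [deficiency, mul_sum]
  refine sum_congr rfl fun u hu => ?_
  rw [filter_fst_verts_Ycomplex hu, card_map, card_univ, sum_map, ← sum_locDef_Ycomplex hφ u]
  exact natCast_card_mul_div_mul_sum _ _

/-- the chain of equalities (3.3):
`|S|·m(Y_φ) = Σ_u c_X(u) Σ_{e ∈ lk(X,u)(1)} (|S| - fix(d₁φ(u∪e)))·c_{lk(X,u)}(e)`. -/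
theorem card_mul_deficiency_eq
    {V : Type*} [Fintype V] [DecidableEq V]
    {G : Type*} [Group G] {S : Type*} [Fintype S] [DecidableEq S] [Nonempty S]
    [MulAction G S]
    (X : SComplex V) (n : ℕ) (hn : 3 ≤ n) (hpure : X.IsPureOfRank n)
    (φ : V → V → G) (hφ : IsCochain G φ) :
    (Fintype.card S : ℝ) * deficiency (Ycomplex X φ S) X Prod.fst =
      ∑ u ∈ X.verts, X.weight {u} *
        ∑ e ∈ (X.lk {u}).simps 1,
          ((Fintype.card S : ℝ) - fixEdge S φ u e) * (X.lk {u}).weight e :=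
  card_mul_deficiency_eq_general X φ hφ
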